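/- If g ∈ ℬ, then limsup_{|z|→1⁻}(1-|z|²)|g'(z)| ≤ dist_ℬ(g, ℬ₀) ≤ limsup_{r→1⁻}‖g - g_r‖_ℬ ≤ 2 limsup_{|z|→1⁻}(1-|z|²)|g'(z)|, where g_r(z) = g(rz). -/

import Mathlib

/-!
For `h ∈ ℬ₀` we have `(1-|z|²)|g'(z)| ≤ ‖g - h‖_ℬ + (1-|z|²)|h'(z)|`, and the last term vanishes
as `|z| → 1`; this gives the lower bound. Each dilation `g_r`, `r < 1`, is holomorphic across the
unit circle, hence lies in `ℬ₀`, which gives the middle inequality. For the upper bound,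
`r(1-|z|²) ≤ 1-|rz|²` bounds `(1-|z|²)|(g - g_r)'(z)|` by the Bloch densities of `g` at `z` and
at `rz`; when `|z|` is close to `1` and `r` close to `1`, both points lie in a thin annulus where
these densities are nearly at most the limsup, while on the remaining compact disc `g_r' → g'`
uniformly.
-/

open Complex MeasureTheory Metric Set Filter Topology

noncomputable section

/-- Möbius involution σ_a(z) = (a-z)/(1 - conj(a) z). -/
def sig (a z : ℂ) : ℂ := (a - z) / (1 - (starRingEnd ℂ) a * z)

/-- p-th power of the Dirichlet-type norm:
`|f(0)|^p + (1/π) ∫_𝔻 |f'(z)|^p (1-|z|²)^{p-1} dA(z)`. -/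
def DpP (p : ℝ) (f : ℂ → ℂ) : ℝ :=
  Norm.norm (f 0) ^ p +
    Real.pi⁻¹ * ∫ z in ball (0 : ℂ) 1,
      Norm.norm (deriv f z) ^ p * (1 - Norm.norm z ^ 2) ^ (p - 1)

/-- The inner F(p,p-1,1) integral at the point `a`:
`(1/π) ∫_𝔻 |F'(z)|^p (1-|z|²)^{p-1} (1-|σ_a(z)|²) dA(z)`. -/
def FpInt (p : ℝ) (F : ℂ → ℂ) (a : ℂ) : ℝ :=
  Real.pi⁻¹ * ∫ z in ball (0 : ℂ) 1,
    Norm.norm (deriv F z) ^ p * (1 - Norm.norm z ^ 2) ^ (p - 1) *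
      (1 - Norm.norm (sig a z) ^ 2)

/-- p-th power of the F(p,p-1,1) norm. -/
def FpP (p : ℝ) (F : ℂ → ℂ) : ℝ :=
  Norm.norm (F 0) ^ p + ⨆ a : ball (0 : ℂ) 1, FpInt p F (a : ℂ)

/-- Volterra operator `T_g f(z) = ∫_0^z f(ξ) g'(ξ) dξ`, parameterized along `[0, z]`. -/
def Tg (g f : ℂ → ℂ) (z : ℂ) : ℂ :=
  ∫ t in (0 : ℝ)..1, f ((t : ℂ) * z) * deriv g ((t : ℂ) * z) * z

/-- Companion operator `I_g f(z) = ∫_0^z f'(ξ) g(ξ) dξ`. -/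
def Ig (g f : ℂ → ℂ) (z : ℂ) : ℂ :=
  ∫ t in (0 : ℝ)..1, deriv f ((t : ℂ) * z) * g ((t : ℂ) * z) * z

/-- Carleson square over the arc of normalized length `h` centered at `e^{iθ}`. -/
def box (θ h : ℝ) : Set ℂ :=
  {z | ∃ r t : ℝ, 1 - h ≤ r ∧ r < 1 ∧ |t| ≤ Real.pi * h ∧
      z = (r : ℂ) * Complex.exp (Complex.I * ((θ : ℂ) + (t : ℂ)))}

/-- Bloch seminorm `sup_{z∈𝔻} (1-|z|²)|g'(z)|`. -/
def BlochN (g : ℂ → ℂ) : ℝ :=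
  ⨆ z : ball (0 : ℂ) 1, (1 - Norm.norm (z : ℂ) ^ 2) * Norm.norm (deriv g (z : ℂ))

/-- `limsup_{|z|→1⁻} (1-|z|²)|g'(z)|`. -/
def limsupB (g : ℂ → ℂ) : ℝ :=
  Filter.limsup (fun z => (1 - Norm.norm z ^ 2) * Norm.norm (deriv g z))
    (Filter.comap (Norm.norm : ℂ → ℝ) (𝓝[<] (1 : ℝ)))

/-- Membership in the little Bloch space ℬ₀. -/
def LittleBloch (h : ℂ → ℂ) : Prop :=
  DifferentiableOn ℂ h (ball 0 1) ∧
    (∃ M : ℝ, ∀ z ∈ ball (0 : ℂ) 1,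
      (1 - Norm.norm z ^ 2) * Norm.norm (deriv h z) ≤ M) ∧
    Tendsto (fun z => (1 - Norm.norm z ^ 2) * Norm.norm (deriv h z))
      (Filter.comap (Norm.norm : ℂ → ℝ) (𝓝[<] (1 : ℝ))) (𝓝 0)

/-- Distance from `g` to the little Bloch space in the Bloch seminorm. -/
def distB (g : ℂ → ℂ) : ℝ :=
  sInf ((fun h => BlochN (fun z => g z - h z)) '' {h | LittleBloch h})

def blochDensity (f : ℂ → ℂ) (z : ℂ) : ℝ := (1 - ‖z‖ ^ 2) * ‖deriv f z‖

def IsBloch (f : ℂ → ℂ) : Prop :=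
  DifferentiableOn ℂ f (ball 0 1) ∧ ∃ M : ℝ, ∀ z ∈ ball (0 : ℂ) 1, blochDensity f z ≤ M

abbrev boundaryFilter : Filter ℂ := comap (norm : ℂ → ℝ) (𝓝[<] 1)

instance : NeBot boundaryFilter :=
  NeBot.comap_of_range_mem inferInstance <|
    mem_of_superset (Ioo_mem_nhdsLT zero_lt_one) fun x hx ↦
      ⟨(x : ℂ), by simp [abs_of_nonneg hx.1.le]⟩

lemma eventually_mem_ball_boundaryFilter : ∀ᶠ z in boundaryFilter, z ∈ ball (0 : ℂ) 1 :=
  have h : ∀ᶠ z in boundaryFilter, ‖z‖ < 1 := preimage_mem_comap self_mem_nhdsWithin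
  h.mono fun _ hz ↦ mem_ball_zero_iff.2 hz

lemma exists_annulus_of_eventually_boundaryFilter {p : ℂ → Prop}
    (h : ∀ᶠ z in boundaryFilter, p z) :
    ∃ a, 0 ≤ a ∧ a < 1 ∧ ∀ z : ℂ, a < ‖z‖ → ‖z‖ < 1 → p z := by
  obtain ⟨l, hl, hsub⟩ := mem_nhdsLT_iff_exists_Ioo_subset.1 (eventually_comap.1 h)
  exact ⟨max l 0, le_max_right _ _, max_lt hl one_pos,
    fun z hlz hz1 ↦ hsub ⟨(le_max_left _ _).trans_lt hlz, hz1⟩ z rfl⟩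

lemma one_sub_norm_sq_nonneg {z : ℂ} (hz : ‖z‖ ≤ 1) : 0 ≤ 1 - ‖z‖ ^ 2 := by
  nlinarith [norm_nonneg z]

lemma blochDensity_nonneg (f : ℂ → ℂ) {z : ℂ} (hz : ‖z‖ ≤ 1) : 0 ≤ blochDensity f z :=
  mul_nonneg (one_sub_norm_sq_nonneg hz) (norm_nonneg _)

lemma blochDensity_le_norm_deriv (f : ℂ → ℂ) (z : ℂ) :
    blochDensity f z ≤ ‖deriv f z‖ :=
  mul_le_of_le_one_left (norm_nonneg _) (by nlinarith [norm_nonneg z])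

lemma tendsto_blochDensity_zero_of_eventually_norm_deriv_le {f : ℂ → ℂ} {C : ℝ}
    (hC : ∀ᶠ z in boundaryFilter, ‖deriv f z‖ ≤ C) :
    Tendsto (blochDensity f) boundaryFilter (𝓝 0) := by
  have hweight : Tendsto (fun z : ℂ ↦ (1 - ‖z‖ ^ 2) * C) boundaryFilter (𝓝 0) := by
    have hnorm : Tendsto (norm : ℂ → ℝ) boundaryFilter (𝓝 1) :=
      tendsto_comap.mono_right nhdsWithin_le_nhds
    simpa using ((tendsto_const_nhds (x := (1 : ℝ))).sub (hnorm.pow 2)).mul_const C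
  refine squeeze_zero' ?_ ?_ hweight
  · filter_upwards [eventually_mem_ball_boundaryFilter] with z hz
    exact blochDensity_nonneg f (mem_ball_zero_iff.1 hz).le
  · filter_upwards [eventually_mem_ball_boundaryFilter, hC] with z hz hCz
    exact mul_le_mul_of_nonneg_left hCz (one_sub_norm_sq_nonneg (mem_ball_zero_iff.1 hz).le)

lemma blochN_nonneg (f : ℂ → ℂ) : 0 ≤ BlochN f :=
  Real.iSup_nonneg fun z ↦ blochDensity_nonneg f (mem_ball_zero_iff.1 z.2).le

lemma blochN_le {f : ℂ → ℂ} {C : ℝ} (hC : ∀ z ∈ ball (0 : ℂ) 1, blochDensity f z ≤ C) :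
    BlochN f ≤ C :=
  haveI : Nonempty (ball (0 : ℂ) 1) := ⟨⟨0, mem_ball_self one_pos⟩⟩
  ciSup_le fun z ↦ hC z z.2

lemma blochDensity_sub {f h : ℂ → ℂ} {z : ℂ} (hf : DifferentiableAt ℂ f z)
    (hh : DifferentiableAt ℂ h z) :
    blochDensity (fun w ↦ f w - h w) z = (1 - ‖z‖ ^ 2) * ‖deriv f z - deriv h z‖ := by
  rw [blochDensity, deriv_fun_sub hf hh]

lemma blochDensity_sub_le {f h : ℂ → ℂ} {z : ℂ} (hf : DifferentiableAt ℂ f z)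
    (hh : DifferentiableAt ℂ h z) (hz : ‖z‖ ≤ 1) :
    blochDensity (fun w ↦ f w - h w) z ≤ blochDensity f z + blochDensity h z := by
  rw [blochDensity_sub hf hh, blochDensity, blochDensity, ← mul_add]
  exact mul_le_mul_of_nonneg_left (norm_sub_le _ _) (one_sub_norm_sq_nonneg hz)

lemma blochDensity_le_sub_add {f h : ℂ → ℂ} {z : ℂ} (hf : DifferentiableAt ℂ f z)
    (hh : DifferentiableAt ℂ h z) (hz : ‖z‖ ≤ 1) :
    blochDensity f z ≤ blochDensity (fun w ↦ f w - h w) z + blochDensity h z := by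
  rw [blochDensity_sub hf hh, blochDensity, blochDensity, ← mul_add]
  exact mul_le_mul_of_nonneg_left (norm_le_norm_sub_add _ _) (one_sub_norm_sq_nonneg hz)

lemma isCoboundedUnder_blochDensity (f : ℂ → ℂ) :
    IsCoboundedUnder (· ≤ ·) boundaryFilter (blochDensity f) :=
  isCoboundedUnder_le_of_eventually_le _ <| eventually_mem_ball_boundaryFilter.mono
    fun _ hz ↦ blochDensity_nonneg f (mem_ball_zero_iff.1 hz).le

namespace IsBloch

variable {f h : ℂ → ℂ}

lemma differentiableAt (hf : IsBloch f) {z : ℂ} (hz : z ∈ ball (0 : ℂ) 1) :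
    DifferentiableAt ℂ f z :=
  hf.1.differentiableAt (isOpen_ball.mem_nhds hz)

lemma blochDensity_le_blochN (hf : IsBloch f) {z : ℂ} (hz : z ∈ ball (0 : ℂ) 1) :
    blochDensity f z ≤ BlochN f :=
  have ⟨M, hM⟩ := hf.2
  le_ciSup (f := fun w : ball (0 : ℂ) 1 ↦ blochDensity f w)
    ⟨M, forall_mem_range.2 fun w ↦ hM w w.2⟩ ⟨z, hz⟩

lemma sub (hf : IsBloch f) (hh : IsBloch h) : IsBloch fun z ↦ f z - h z := by
  obtain ⟨Mf, hMf⟩ := hf.2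
  obtain ⟨Mh, hMh⟩ := hh.2
  refine ⟨hf.1.sub hh.1, Mf + Mh, fun z hz ↦ ?_⟩
  exact (blochDensity_sub_le (hf.differentiableAt hz) (hh.differentiableAt hz)
    (mem_ball_zero_iff.1 hz).le).trans (add_le_add (hMf z hz) (hMh z hz))

lemma isBoundedUnder_blochDensity (hf : IsBloch f) :
    IsBoundedUnder (· ≤ ·) boundaryFilter (blochDensity f) :=
  have ⟨M, hM⟩ := hf.2
  ⟨M, eventually_mem_ball_boundaryFilter.mono hM⟩

lemma limsupB_nonneg (hf : IsBloch f) : 0 ≤ limsupB f :=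
  le_limsup_of_frequently_le (eventually_mem_ball_boundaryFilter.mono fun _ hz ↦
    blochDensity_nonneg f (mem_ball_zero_iff.1 hz).le).frequently hf.isBoundedUnder_blochDensity

end IsBloch

lemma deriv_dilation (f : ℂ → ℂ) (r z : ℂ) :
    deriv (fun w ↦ f (r * w)) z = r * deriv f (r * z) :=
  deriv_comp_mul_left r f z

section Dilation

variable {r : ℝ}

lemma norm_ofReal_mul_le (hr0 : 0 ≤ r) (hr1 : r ≤ 1) (z : ℂ) : ‖(r : ℂ) * z‖ ≤ ‖z‖ := by
  rw [norm_mul, Complex.norm_of_nonneg hr0]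
  exact mul_le_of_le_one_left (norm_nonneg z) hr1

lemma ofReal_mul_mem_ball (hr0 : 0 ≤ r) (hr1 : r ≤ 1) {z : ℂ} (hz : z ∈ ball (0 : ℂ) 1) :
    (r : ℂ) * z ∈ ball (0 : ℂ) 1 :=
  mem_ball_zero_iff.2 ((norm_ofReal_mul_le hr0 hr1 z).trans_lt (mem_ball_zero_iff.1 hz))

lemma mul_one_sub_norm_sq_le (hr0 : 0 ≤ r) (hr1 : r ≤ 1) (z : ℂ) :
    r * (1 - ‖z‖ ^ 2) ≤ 1 - ‖(r : ℂ) * z‖ ^ 2 := by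
  rw [norm_mul, Complex.norm_of_nonneg hr0, mul_pow]
  nlinarith [norm_nonneg z, mul_nonneg (mul_nonneg hr0 (sub_nonneg.2 hr1)) (sq_nonneg ‖z‖)]

lemma blochDensity_dilation_le (f : ℂ → ℂ) (hr0 : 0 ≤ r) (hr1 : r ≤ 1) (z : ℂ) :
    blochDensity (fun w ↦ f (r * w)) z ≤ blochDensity f (r * z) := by
  rw [blochDensity, blochDensity, deriv_dilation, norm_mul, Complex.norm_of_nonneg hr0,
    ← mul_assoc, mul_comm _ r]
  exact mul_le_mul_of_nonneg_right (mul_one_sub_norm_sq_le hr0 hr1 z) (norm_nonneg _)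

namespace IsBloch

variable {f : ℂ → ℂ}

lemma dilation (hf : IsBloch f) (hr0 : 0 ≤ r) (hr1 : r ≤ 1) : IsBloch fun z ↦ f (r * z) := by
  obtain ⟨hd, M, hM⟩ := hf
  refine ⟨hd.comp (differentiableOn_id.const_mul _) fun z hz ↦ ofReal_mul_mem_ball hr0 hr1 hz,
    M, fun z hz ↦ ?_⟩
  exact (blochDensity_dilation_le f hr0 hr1 z).trans
    (hM _ (ofReal_mul_mem_ball hr0 hr1 hz))

lemma littleBloch_dilation (hf : IsBloch f) (hr0 : 0 ≤ r) (hr1 : r < 1) :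
    LittleBloch fun z ↦ f (r * z) := by
  obtain ⟨hd, M, hM⟩ := hf.dilation hr0 hr1.le
  have hcont : ContinuousOn (deriv f) (closedBall 0 r) :=
    (hf.1.analyticOnNhd isOpen_ball).deriv.continuousOn.mono (closedBall_subset_ball hr1)
  obtain ⟨C, hC⟩ := (isCompact_closedBall (0 : ℂ) r).exists_bound_of_continuousOn hcont
  refine ⟨hd, ⟨M, hM⟩, tendsto_blochDensity_zero_of_eventually_norm_deriv_le (C := C) ?_⟩
  filter_upwards [eventually_mem_ball_boundaryFilter] with z hz
  have hrz : (r : ℂ) * z ∈ closedBall (0 : ℂ) r := by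
    rw [mem_closedBall_zero_iff, norm_mul, Complex.norm_of_nonneg hr0]
    exact mul_le_of_le_one_right hr0 (mem_ball_zero_iff.1 hz).le
  rw [deriv_dilation, norm_mul, Complex.norm_of_nonneg hr0]
  exact (mul_le_of_le_one_left (norm_nonneg _) hr1.le).trans (hC _ hrz)

end IsBloch

end Dilation

lemma distB_le_blochN_sub (g : ℂ → ℂ) {h : ℂ → ℂ} (hh : LittleBloch h) :
    distB g ≤ BlochN fun z ↦ g z - h z :=
  csInf_le ⟨0, forall_mem_image.2 fun _ _ ↦ blochN_nonneg _⟩ (mem_image_of_mem _ hh)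

lemma eventually_norm_deriv_sub_dilation_lt {f : ℂ → ℂ} (hf : DifferentiableOn ℂ f (ball 0 1))
    {ρ ε : ℝ} (hρ : ρ < 1) (hε : 0 < ε) :
    ∀ᶠ r : ℝ in 𝓝 1, ∀ z ∈ closedBall (0 : ℂ) ρ, ‖deriv f z - r * deriv f (r * z)‖ < ε := by
  refine (isCompact_closedBall 0 ρ).eventually_forall_of_forall_eventually fun y hy ↦ ?_
  have hcont : ContinuousAt (deriv f) y :=
    ((hf.analyticOnNhd isOpen_ball).deriv y (closedBall_subset_ball hρ hy)).continuousAt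
  have hdil : ContinuousAt (fun p : ℝ × ℂ ↦ deriv f (p.1 * p.2)) (1, y) :=
    hcont.comp_of_eq (by fun_prop) (by simp)
  have hF : ContinuousAt (fun p : ℝ × ℂ ↦ deriv f p.2 - p.1 * deriv f (p.1 * p.2)) (1, y) := by
    have hsnd : ContinuousAt (fun p : ℝ × ℂ ↦ deriv f p.2) (1, y) :=
      hcont.comp_of_eq continuousAt_snd rfl
    fun_prop
  exact hF.norm.eventually_lt continuousAt_const (by simpa using hε)

namespace IsBloch

variable {g : ℂ → ℂ}

lemma limsupB_le_blochN_sub {h : ℂ → ℂ} (hg : IsBloch g) (hh : LittleBloch h) :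
    limsupB g ≤ BlochN fun z ↦ g z - h z := by
  obtain ⟨hhd, hhB, hh0⟩ := hh
  have hgh : IsBloch fun z ↦ g z - h z := hg.sub ⟨hhd, hhB⟩
  have hle : blochDensity g ≤ᶠ[boundaryFilter]
      fun z ↦ BlochN (fun z ↦ g z - h z) + blochDensity h z := by
    filter_upwards [eventually_mem_ball_boundaryFilter] with z hz
    exact (blochDensity_le_sub_add (hg.differentiableAt hz)
      (hhd.differentiableAt (isOpen_ball.mem_nhds hz)) (mem_ball_zero_iff.1 hz).le).trans
      (add_le_add_left (hgh.blochDensity_le_blochN hz) _)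
  have hlim : Tendsto (fun z ↦ BlochN (fun z ↦ g z - h z) + blochDensity h z) boundaryFilter
      (𝓝 (BlochN fun z ↦ g z - h z)) := by
    have h := (tendsto_const_nhds (x := BlochN fun z ↦ g z - h z)).add hh0
    rwa [add_zero] at h
  calc limsupB g = limsup (blochDensity g) boundaryFilter := rfl
    _ ≤ _ := limsup_le_limsup hle (isCoboundedUnder_blochDensity g) hlim.isBoundedUnder_le
    _ = _ := hlim.limsup_eq

lemma limsupB_le_distB (hg : IsBloch g) : limsupB g ≤ distB g :=
  le_csInf ⟨_, mem_image_of_mem _ (hg.littleBloch_dilation le_rfl zero_lt_one)⟩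
    (forall_mem_image.2 fun _ hh ↦ hg.limsupB_le_blochN_sub hh)

lemma eventually_blochN_sub_dilation_le (hg : IsBloch g) {ε : ℝ} (hε : 0 < ε) :
    ∀ᶠ r : ℝ in 𝓝[<] 1, BlochN (fun z ↦ g z - g (r * z)) ≤ 2 * (limsupB g + ε) := by
  obtain ⟨a, ha0, ha1, hann⟩ := exists_annulus_of_eventually_boundaryFilter
    (eventually_lt_of_limsup_lt (lt_add_of_pos_right (limsupB g) hε)
      hg.isBoundedUnder_blochDensity)
  have hL := hg.limsupB_nonneg
  obtain ⟨ρ, haρ, hρ1⟩ := exists_between ha1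
  have hρ0 : 0 < ρ := ha0.trans_lt haρ
  filter_upwards [nhdsWithin_le_nhds (eventually_norm_deriv_sub_dilation_lt hg.1 hρ1 hε),
    Ioo_mem_nhdsLT ((div_lt_one hρ0).2 haρ)] with r hK hr
  have hr0 : 0 ≤ r := (div_nonneg ha0 hρ0.le).trans hr.1.le
  refine blochN_le fun z hz ↦ ?_
  have hz1 : ‖z‖ < 1 := mem_ball_zero_iff.1 hz
  have hgz := hg.differentiableAt hz
  have hgrz := (hg.dilation hr0 hr.2.le).differentiableAt hz
  rcases le_or_gt ‖z‖ ρ with hzρ | hρz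
  · calc blochDensity (fun w ↦ g w - g (r * w)) z
        ≤ ‖deriv (fun w ↦ g w - g (r * w)) z‖ := blochDensity_le_norm_deriv _ z
      _ = ‖deriv g z - r * deriv g (r * z)‖ := by rw [deriv_fun_sub hgz hgrz, deriv_dilation]
      _ ≤ ε := (hK z (mem_closedBall_zero_iff.2 hzρ)).le
      _ ≤ 2 * (limsupB g + ε) := by linarith
  · have harz : a < ‖(r : ℂ) * z‖ := by
      rw [norm_mul, Complex.norm_of_nonneg hr0]
      calc a = a / ρ * ρ := (div_mul_cancel₀ a hρ0.ne').symm
        _ < r * ρ := mul_lt_mul_of_pos_right hr.1 hρ0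
        _ ≤ r * ‖z‖ := mul_le_mul_of_nonneg_left hρz.le hr0
    have hrz1 : ‖(r : ℂ) * z‖ < 1 := (norm_ofReal_mul_le hr0 hr.2.le z).trans_lt hz1
    calc blochDensity (fun w ↦ g w - g (r * w)) z
        ≤ blochDensity g z + blochDensity (fun w ↦ g (r * w)) z :=
          blochDensity_sub_le hgz hgrz hz1.le
      _ ≤ blochDensity g z + blochDensity g (r * z) :=
          add_le_add le_rfl (blochDensity_dilation_le g hr0 hr.2.le z)
      _ ≤ 2 * (limsupB g + ε) := by
          have hdz : blochDensity g z < limsupB g + ε := hann z (haρ.trans hρz) hz1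
          have hdrz : blochDensity g (r * z) < limsupB g + ε := hann _ harz hrz1
          linarith

lemma distB_le_limsup_blochN_sub_dilation (hg : IsBloch g) :
    distB g ≤ limsup (fun r : ℝ ↦ BlochN fun z ↦ g z - g (r * z)) (𝓝[<] 1) := by
  refine le_limsup_of_frequently_le (Eventually.frequently ?_)
    ⟨_, hg.eventually_blochN_sub_dilation_le one_pos⟩
  filter_upwards [Ioo_mem_nhdsLT zero_lt_one] with r hr
  exact distB_le_blochN_sub g (hg.littleBloch_dilation hr.1.le hr.2)

lemma limsup_blochN_sub_dilation_le (hg : IsBloch g) :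
    limsup (fun r : ℝ ↦ BlochN fun z ↦ g z - g (r * z)) (𝓝[<] 1) ≤ 2 * limsupB g := by
  refine le_of_forall_pos_le_add fun ε hε ↦ ?_
  have h := limsup_le_of_le (isCoboundedUnder_le_of_le _ fun r ↦ blochN_nonneg _)
    (hg.eventually_blochN_sub_dilation_le (half_pos hε))
  linarith

end IsBloch

/-- distance formula from a Bloch function to the little Bloch space. -/
theorem stmt17 (g : ℂ → ℂ) (hg : DifferentiableOn ℂ g (ball 0 1))
    (hB : ∃ M : ℝ, ∀ z ∈ ball (0 : ℂ) 1,
      (1 - Norm.norm z ^ 2) * Norm.norm (deriv g z) ≤ M) :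
    limsupB g ≤ distB g ∧
      distB g ≤
        Filter.limsup (fun r : ℝ => BlochN (fun z => g z - g ((r : ℂ) * z)))
          (𝓝[<] (1 : ℝ)) ∧
      Filter.limsup (fun r : ℝ => BlochN (fun z => g z - g ((r : ℂ) * z)))
          (𝓝[<] (1 : ℝ)) ≤ 2 * limsupB g := by
  have hBloch : IsBloch g := ⟨hg, hB⟩
  exact ⟨hBloch.limsupB_le_distB, hBloch.distB_le_limsup_blochN_sub_dilation,
    hBloch.limsup_blochN_sub_dilation_le⟩
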